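/- Let X be a nonzero real Banach space. If t(X) = 1, then T(X*) = 2, where X* denotes the topological dual of X with its canonical norm. -/

import Mathlib

/-!
Let the unit ball of `X*` be covered by closed balls of radius `r` around unit functionals
`f₁, …, fₙ`, and pick unit vectors `xᵢ` with `fᵢ xᵢ > 1 - δ`. Since `t(X) = 1`, there is a unit
vector `y` with `‖xᵢ ± y‖ < 1 + δ` for all `i`. A norming functional `g` of `y` satisfies
`g xᵢ < δ`, and `fᵢ y < 2δ`, so `(g - fᵢ)(y - xᵢ) > 2 - 4δ` while `‖y - xᵢ‖ < 1 + δ`. Hence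
`g` is at distance at least `(2 - 4δ) / (1 + δ)` from every `fᵢ`, which forces `r ≥ 2`.
-/

open Metric Filter Topology

noncomputable def thinness (X : Type*) [NormedAddCommGroup X] : ℝ :=
  sInf {r : ℝ | 0 < r ∧ ∀ (n : ℕ) (x : Fin n → X), (∀ i, ‖x i‖ = 1) →
    ∀ ε : ℝ, 0 < ε → ∃ y : X, ‖y‖ = 1 ∧ ∀ i, ‖x i - y‖ < r + ε}

noncomputable def thickness (X : Type*) [NormedAddCommGroup X] : ℝ :=
  sInf {r : ℝ | 0 < r ∧ ∃ (n : ℕ) (x : Fin n → X), (∀ i, ‖x i‖ = 1) ∧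
    Metric.closedBall (0 : X) 1 ⊆ ⋃ i, Metric.closedBall (x i) r}

section Thinness

variable {X : Type*} [NormedAddCommGroup X] [NormedSpace ℝ X] [Nontrivial X]

theorem exists_norm_eq_one_forall_norm_sub_lt_of_thinness_lt {r : ℝ} (hr : thinness X < r)
    {n : ℕ} (x : Fin n → X) (hx : ∀ i, ‖x i‖ = 1) :
    ∃ y : X, ‖y‖ = 1 ∧ ∀ i, ‖x i - y‖ < r := by
  obtain ⟨u, hu⟩ := exists_norm_eq X zero_le_one
  have two_mem : 0 < (2 : ℝ) ∧ ∀ (n : ℕ) (x : Fin n → X), (∀ i, ‖x i‖ = 1) →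
      ∀ ε : ℝ, 0 < ε → ∃ y : X, ‖y‖ = 1 ∧ ∀ i, ‖x i - y‖ < 2 + ε :=
    ⟨two_pos, fun n x hx ε hε => ⟨u, hu, fun i => by linarith [norm_sub_le (x i) u, hx i]⟩⟩
  obtain ⟨a, ⟨-, ha⟩, har⟩ := exists_lt_of_csInf_lt ⟨2, two_mem⟩ hr
  obtain ⟨y, hy, hxy⟩ := ha n x hx (r - a) (sub_pos.2 har)
  exact ⟨y, hy, fun i => by simpa using hxy i⟩

theorem exists_norm_eq_one_forall_norm_sub_lt_and_norm_add_lt_of_thinness_lt {r : ℝ}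
    (hr : thinness X < r) {n : ℕ} (x : Fin n → X) (hx : ∀ i, ‖x i‖ = 1) :
    ∃ y : X, ‖y‖ = 1 ∧ ∀ i, ‖x i - y‖ < r ∧ ‖x i + y‖ < r := by
  have hx' : ∀ j, ‖Fin.append x (-x) j‖ = 1 := Fin.addCases
    (fun i => by rw [Fin.append_left, hx])
    (fun i => by rw [Fin.append_right, Pi.neg_apply, norm_neg, hx])
  obtain ⟨y, hy, hxy⟩ := exists_norm_eq_one_forall_norm_sub_lt_of_thinness_lt hr _ hx'
  refine ⟨y, hy, fun i => ⟨?_, ?_⟩⟩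
  · simpa only [Fin.append_left] using hxy (Fin.castAdd n i)
  · simpa only [Fin.append_right, Pi.neg_apply, ← neg_add', norm_neg] using hxy (Fin.natAdd n i)

end Thinness

namespace StrongDual

variable {X : Type*} [NormedAddCommGroup X] [NormedSpace ℝ X]

theorem exists_norm_eq_one_lt_apply (f : StrongDual ℝ X) {r : ℝ} (hr₀ : 0 ≤ r)
    (hr : r < ‖f‖) : ∃ x : X, ‖x‖ = 1 ∧ r < f x := by
  obtain ⟨x, hx₁, hfx⟩ := f.exists_lt_apply_of_lt_opNorm hr
  wlog hpos : 0 ≤ f x generalizing x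
  · exact this (-x) (by rwa [norm_neg]) (by rwa [map_neg, norm_neg])
      (by rw [map_neg]; linarith)
  rw [Real.norm_of_nonneg hpos] at hfx
  have hx₀ : x ≠ 0 := by rintro rfl; rw [map_zero] at hfx; linarith
  refine ⟨‖x‖⁻¹ • x, norm_smul_inv_norm hx₀, ?_⟩
  rw [map_smul, smul_eq_mul]
  exact hfx.trans_le (le_mul_of_one_le_left hpos (one_le_inv₀ (norm_pos_iff.2 hx₀) |>.2 hx₁.le))

theorem two_sub_four_mul_lt_norm_sub_mul_norm_sub {f g : StrongDual ℝ X} (hf : ‖f‖ ≤ 1)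
    (hg : ‖g‖ ≤ 1) {x y : X} {δ : ℝ} (hfx : 1 - δ < f x) (hgy : g y = 1)
    (hxy : ‖x + y‖ < 1 + δ) : 2 - 4 * δ < ‖g - f‖ * ‖y - x‖ := by
  have le_norm (φ : StrongDual ℝ X) (hφ : ‖φ‖ ≤ 1) (z : X) : φ z ≤ ‖z‖ :=
    (Real.le_norm_self _).trans (by simpa using φ.le_of_opNorm_le hφ z)
  have hgx : g x < δ := by linarith [le_norm g hg (x + y), map_add g x y]
  have hfy : f y < 2 * δ := by linarith [le_norm f hf (x + y), map_add f x y]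
  calc 2 - 4 * δ < g y - g x - f y + f x := by linarith
    _ = (g - f) (y - x) := by simp only [map_sub, sub_apply]; ring
    _ ≤ ‖g - f‖ * ‖y - x‖ := (Real.le_norm_self _).trans ((g - f).le_opNorm _)

theorem exists_norm_eq_one_forall_le_norm_sub_of_thinness_le_one [Nontrivial X]
    (h : thinness X ≤ 1) {n : ℕ} (f : Fin n → StrongDual ℝ X) (hf : ∀ i, ‖f i‖ = 1)
    {δ : ℝ} (hδ₀ : 0 < δ) (hδ₁ : δ < 1) :
    ∃ g : StrongDual ℝ X, ‖g‖ = 1 ∧ ∀ i, (2 - 4 * δ) / (1 + δ) ≤ ‖g - f i‖ := by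
  choose x hx hfx using fun i =>
    (f i).exists_norm_eq_one_lt_apply (sub_nonneg.2 hδ₁.le) ((hf i).symm ▸ sub_lt_self 1 hδ₀)
  obtain ⟨y, hy, hxy⟩ := exists_norm_eq_one_forall_norm_sub_lt_and_norm_add_lt_of_thinness_lt
    (h.trans_lt (lt_add_of_pos_right 1 hδ₀)) x hx
  obtain ⟨g, hg, hgy⟩ := exists_dual_vector ℝ y (by simp [hy])
  refine ⟨g, hg, fun i => (div_le_iff₀ (by linarith)).2 ?_⟩
  calc 2 - 4 * δ ≤ ‖g - f i‖ * ‖y - x i‖ :=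
        (two_sub_four_mul_lt_norm_sub_mul_norm_sub (hf i).le hg.le (hfx i) (by simpa [hy] using hgy)
          (hxy i).2).le
    _ ≤ ‖g - f i‖ * (1 + δ) := by
        gcongr
        exact (norm_sub_rev _ _).trans_le (hxy i).1.le

theorem two_le_of_closedBall_subset_iUnion_closedBall [Nontrivial X] (h : thinness X ≤ 1)
    {n : ℕ} {f : Fin n → StrongDual ℝ X} (hf : ∀ i, ‖f i‖ = 1) {r : ℝ}
    (hcov : closedBall 0 1 ⊆ ⋃ i, closedBall (f i) r) : 2 ≤ r := by
  have hlim : Tendsto (fun δ : ℝ => (2 - 4 * δ) / (1 + δ)) (𝓝[>] 0) (𝓝 2) := by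
    have hcont : ContinuousAt (fun δ : ℝ => (2 - 4 * δ) / (1 + δ)) 0 := by
      fun_prop (disch := norm_num)
    simpa using hcont.tendsto.mono_left nhdsWithin_le_nhds
  refine le_of_tendsto hlim ?_
  filter_upwards [Ioo_mem_nhdsGT one_pos] with δ ⟨hδ₀, hδ₁⟩
  obtain ⟨g, hg, hfar⟩ := exists_norm_eq_one_forall_le_norm_sub_of_thinness_le_one h f hf hδ₀ hδ₁
  obtain ⟨i, hi⟩ := Set.mem_iUnion.1 (hcov (mem_closedBall_zero_iff.2 hg.le))
  exact (hfar i).trans (mem_closedBall_iff_norm.1 hi)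

end StrongDual

theorem exists_norm_eq_one_closedBall_subset_iUnion_closedBall_two (E : Type*)
    [NormedAddCommGroup E] [NormedSpace ℝ E] [Nontrivial E] :
    ∃ (n : ℕ) (x : Fin n → E), (∀ i, ‖x i‖ = 1) ∧ closedBall 0 1 ⊆ ⋃ i, closedBall (x i) 2 := by
  obtain ⟨u, hu⟩ := exists_norm_eq E zero_le_one
  refine ⟨1, fun _ => u, fun _ => hu, fun z hz => Set.mem_iUnion.2 ⟨0, ?_⟩⟩
  exact closedBall_subset_closedBall' (by rw [dist_zero_left, hu]; norm_num) hz

theorem thinness_one_implies_thickness_dual_two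
    (X : Type*) [NormedAddCommGroup X] [NormedSpace ℝ X] [Nontrivial X]
    (h : thinness X = 1) :
    thickness (StrongDual ℝ X) = 2 := by
  have cover_two := exists_norm_eq_one_closedBall_subset_iUnion_closedBall_two (StrongDual ℝ X)
  refine le_antisymm (csInf_le ⟨0, fun _ hr => hr.1.le⟩ ⟨two_pos, cover_two⟩) ?_
  refine le_csInf ⟨2, two_pos, cover_two⟩ ?_
  rintro r ⟨-, n, f, hf, hcov⟩
  exact StrongDual.two_le_of_closedBall_subset_iUnion_closedBall h.le hf hcov
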